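/- Every S-Noetherian commutative ring is S-coherent. -/

import Mathlib

open Function LinearMap

/-- A module `M` is `S`-finite: there is a f.g. submodule `N₀` and `s ∈ S` with `s • M ⊆ N₀`. -/
def SFiniteMod (R : Type*) [CommRing R] (S : Submonoid R)
    (M : Type*) [AddCommGroup M] [Module R M] : Prop :=
  ∃ N₀ : Submodule R M, N₀.FG ∧ ∃ s ∈ S, ∀ m : M, s • m ∈ N₀

/-- A module `M` is `S`-finitely presented: there is an exact sequence
`0 → K → F → M → 0` with `F` finitely generated free and `K` `S`-finite. -/
def SFinitePres (R : Type*) [CommRing R] (S : Submonoid R)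
    (M : Type*) [AddCommGroup M] [Module R M] : Prop :=
  ∃ (n : ℕ) (f : (Fin n → R) →ₗ[R] M), Function.Surjective f ∧
    ∃ K₀ : Submodule R (Fin n → R), K₀.FG ∧ K₀ ≤ LinearMap.ker f ∧
      ∃ s ∈ S, ∀ x ∈ LinearMap.ker f, s • x ∈ K₀

/-- An ideal `I` is `S`-finite. -/
def SFiniteIdeal (R : Type*) [CommRing R] (S : Submonoid R) (I : Ideal R) : Prop :=
  ∃ J : Ideal R, J.FG ∧ J ≤ I ∧ ∃ s ∈ S, ∀ x ∈ I, s * x ∈ J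

/-- `R` is an `S`-coherent ring: every finitely generated ideal is `S`-finitely presented. -/
def SCoherentRing (R : Type*) [CommRing R] (S : Submonoid R) : Prop :=
  ∀ I : Ideal R, I.FG → SFinitePres R S ↥I

/-- `M` is an `S`-coherent module: finitely generated and every finitely generated
submodule is `S`-finitely presented. -/
def SCoherentMod (R : Type*) [CommRing R] (S : Submonoid R)
    (M : Type*) [AddCommGroup M] [Module R M] : Prop :=
  Module.Finite R M ∧ ∀ N : Submodule R M, N.FG → SFinitePres R S ↥N

/-!
Choose a surjection `Rⁿ → I`; it suffices that every submodule of `Rⁿ` is `S`-finite. This is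
inherited along `0 → R → R × Rⁿ⁻¹ → Rⁿ⁻¹ → 0`: if `f(N)` and `N ∩ ker f` are `S`-finite with
witnesses `s₁` and `s₂`, lift to `N` the finitely many generators of a submodule of `f(N)`
containing `s₁ f(N)`; then `s₂ s₁ N` lies in the span of these lifts and of the finitely many
generators for `s₂ (N ∩ ker f)`.
-/

namespace Submodule

variable {R M M' : Type*} [Ring R] [AddCommGroup M] [Module R M] [AddCommGroup M'] [Module R M']

def IsSFinite (S : Submonoid R) (N : Submodule R M) : Prop :=
  ∃ N₀ : Submodule R M, N₀.FG ∧ N₀ ≤ N ∧ ∃ s ∈ S, ∀ x ∈ N, s • x ∈ N₀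

variable {S : Submonoid R}

theorem IsSFinite.map (f : M →ₗ[R] M') {N : Submodule R M} (hN : N.IsSFinite S) :
    (N.map f).IsSFinite S := by
  obtain ⟨N₀, hN₀, hN₀N, s, hs, hsN⟩ := hN
  refine ⟨N₀.map f, hN₀.map f, map_mono hN₀N, s, hs, ?_⟩
  rintro _ ⟨x, hx, rfl⟩
  exact ⟨s • x, hsN x hx, map_smul f s x⟩

theorem exists_fg_le_map_eq_of_fg_of_le_map (f : M →ₗ[R] M') {N : Submodule R M}
    {P : Submodule R M'} (hP : P.FG) (hPN : P ≤ N.map f) :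
    ∃ N₁ : Submodule R M, N₁.FG ∧ N₁ ≤ N ∧ N₁.map f = P := by
  obtain ⟨T, hT, rfl⟩ := fg_def.1 hP
  have hTN : T ⊆ f '' N := by
    rw [← map_coe]
    exact subset_span.trans (SetLike.coe_subset_coe.2 hPN)
  obtain ⟨T', hT'N, hT', hT'T⟩ :=
    Set.exists_subset_image_finite_and.1 ⟨T, hTN, hT, rfl⟩
  exact ⟨span R T', fg_def.2 ⟨T', hT', rfl⟩, span_le.2 hT'N, by rw [map_span, hT'T]⟩

theorem IsSFinite.of_map_of_inf_ker (f : M →ₗ[R] M') {N : Submodule R M}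
    (hmap : (N.map f).IsSFinite S) (hker : (N ⊓ LinearMap.ker f).IsSFinite S) :
    N.IsSFinite S := by
  obtain ⟨P₀, hP₀, hP₀N, s₁, hs₁, hs₁N⟩ := hmap
  obtain ⟨Q₀, hQ₀, hQ₀N, s₂, hs₂, hs₂N⟩ := hker
  obtain ⟨N₁, hN₁, hN₁N, rfl⟩ := exists_fg_le_map_eq_of_fg_of_le_map f hP₀ hP₀N
  refine ⟨N₁ ⊔ Q₀, hN₁.sup hQ₀, sup_le hN₁N (hQ₀N.trans inf_le_left), s₂ * s₁,
    S.mul_mem hs₂ hs₁, fun x hx => ?_⟩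
  obtain ⟨y, hyN₁, hy⟩ := hs₁N (f x) (mem_map_of_mem hx)
  have hker : s₁ • x - y ∈ N ⊓ LinearMap.ker f :=
    ⟨sub_mem (N.smul_mem s₁ hx) (hN₁N hyN₁), by simp [hy]⟩
  have hsplit : (s₂ * s₁) • x = s₂ • y + s₂ • (s₁ • x - y) := by
    rw [smul_sub, mul_smul, add_sub_cancel]
  rw [hsplit]
  exact add_mem (mem_sup_left (N₁.smul_mem s₂ hyN₁)) (mem_sup_right (hs₂N _ hker))

end Submodule

def IsSNoetherianModule {R : Type*} [Ring R] (S : Submonoid R)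
    (M : Type*) [AddCommGroup M] [Module R M] : Prop :=
  ∀ N : Submodule R M, N.IsSFinite S

namespace IsSNoetherianModule

variable {R M M' : Type*} [Ring R] [AddCommGroup M] [Module R M] [AddCommGroup M'] [Module R M']
  {S : Submonoid R}

theorem of_subsingleton [Subsingleton M] : IsSNoetherianModule S M := fun N =>
  ⟨⊥, Submodule.fg_bot, bot_le, 1, S.one_mem, fun x _ => by simp [Subsingleton.elim x 0]⟩

theorem of_linearEquiv (e : M ≃ₗ[R] M') (hM : IsSNoetherianModule S M) :
    IsSNoetherianModule S M' := fun N =>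
  Submodule.map_comap_eq_of_surjective e.surjective N ▸ (hM _).map (e : M →ₗ[R] M')

theorem prod (hM : IsSNoetherianModule S M) (hM' : IsSNoetherianModule S M') :
    IsSNoetherianModule S (M × M') := fun N => by
  refine .of_map_of_inf_ker (LinearMap.snd R M M') (hM' _) ?_
  have hrange :
      N ⊓ LinearMap.ker (LinearMap.snd R M M') ≤ LinearMap.range (LinearMap.inl R M M') :=
    LinearMap.range_inl R M M' ▸ inf_le_right
  rw [← Submodule.map_comap_eq_self hrange]
  exact (hM _).map _

theorem pi_fin (hR : IsSNoetherianModule S R) (n : ℕ) : IsSNoetherianModule S (Fin n → R) := by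
  induction n with
  | zero => exact of_subsingleton
  | succ n ih => exact (hR.prod ih).of_linearEquiv (Fin.consLinearEquiv R fun _ => R)

end IsSNoetherianModule

theorem isSNoetherianModule_self_iff {R : Type*} [CommRing R] {S : Submonoid R} :
    IsSNoetherianModule S R ↔ ∀ I : Ideal R, SFiniteIdeal R S I :=
  Iff.rfl

theorem sFinitePres_of_surjective_of_ker_isSFinite {R M : Type*} [CommRing R] [AddCommGroup M]
    [Module R M] {S : Submonoid R} {n : ℕ} (f : (Fin n → R) →ₗ[R] M) (hf : Surjective f)
    (hker : (LinearMap.ker f).IsSFinite S) : SFinitePres R S M :=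
  let ⟨K₀, hK₀, hK₀f, s, hs, hsK₀⟩ := hker
  ⟨n, f, hf, K₀, hK₀, hK₀f, s, hs, hsK₀⟩

theorem IsSNoetherianModule.sFinitePres_of_finite {R M : Type*} [CommRing R] [AddCommGroup M]
    [Module R M] [Module.Finite R M] {S : Submonoid R} (hR : IsSNoetherianModule S R) :
    SFinitePres R S M := by
  obtain ⟨n, v, hv⟩ := Module.Finite.exists_fin (R := R) (M := M)
  have hsurj : Surjective (Fintype.linearCombination R v) := by
    rw [← LinearMap.range_eq_top, Fintype.range_linearCombination, hv]
  exact sFinitePres_of_surjective_of_ker_isSFinite _ hsurj (hR.pi_fin n _)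

/-- Every S-Noetherian commutative ring is S-coherent. -/
theorem stmt12 {R : Type*} [CommRing R] (S : Submonoid R)
    (h : ∀ I : Ideal R, SFiniteIdeal R S I) : SCoherentRing R S := fun I hI =>
  have : Module.Finite R I := Module.Finite.iff_fg.2 hI
  (isSNoetherianModule_self_iff.2 h).sFinitePres_of_finite
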